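/- Let 0 < t ≤ 1, s ∈ {1,-1}, X = τ·diag(t⁻¹,t,t,t⁻¹), L = s(1₄ + EE'), and L̃ = τLτ. Define the 16×16 matrix R = (1₂ ⊗ X ⊗ 1₂)(L ⊗ L̃)(1₂ ⊗ X⁻¹ ⊗ 1₂). Then R² = 1₁₆, the eigenspace of R for the eigenvalue -1 has dimension 6, the eigenspace for the eigenvalue +1 has dimension 10, and trace(R) = 4. -/

import Mathlib

/-! Since `1₄ + EE' = τ`, both `L` and `L̃` equal `sτ`, so `L ⊗ L̃ = s²(τ ⊗ τ) = τ ⊗ τ` and `R` is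
conjugate to the involution `τ ⊗ τ`. Hence `R² = 1` and `tr R = (tr τ)² = 4`. For any involution
`f` (in characteristic zero), `(1 + f)/2` and `(1 - f)/2` are complementary idempotents with ranges
the `±1`-eigenspaces, so their traces give `d₊ + d₋ = dim` and `d₊ - d₋ = tr f`; with
`dim = 16` and `tr R = 4` this forces `d₊ = 10`, `d₋ = 6`. -/

open Matrix Complex

noncomputable section

/-- Kronecker product of `Fin`-indexed matrices, with the standard (lexicographic)
Kronecker ordering of indices. -/
def kron {m n p q : ℕ} (A : Matrix (Fin m) (Fin n) ℂ) (B : Matrix (Fin p) (Fin q) ℂ) :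
    Matrix (Fin (m * p)) (Fin (n * q)) ℂ :=
  Matrix.of fun i j => A i.divNat j.divNat * B i.modNat j.modNat

/-- The flip matrix τ on ℂ²⊗ℂ² ≅ ℂ⁴ determined by τ(u⊗v) = v⊗u. -/
def tau4 : Matrix (Fin 4) (Fin 4) ℂ :=
  !![1, 0, 0, 0; 0, 0, 1, 0; 0, 1, 0, 0; 0, 0, 0, 1]

/-- E = e₁⊗e₂ - e₂⊗e₁ as a column vector. -/
def Evec : Matrix (Fin 4) (Fin 1) ℂ := !![0; 1; -1; 0]

/-- E' = -e¹⊗e² + e²⊗e¹ as a row vector. -/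
def Evec' : Matrix (Fin 1) (Fin 4) ℂ := !![0, -1, 1, 0]

/-- 2×2 identity matrix. -/
def one2 : Matrix (Fin 2) (Fin 2) ℂ := 1

/-- `X = τ·diag(t⁻¹, t, t, t⁻¹)`. -/
def Xq (t : ℝ) : Matrix (Fin 4) (Fin 4) ℂ :=
  tau4 * Matrix.diagonal ![(t : ℂ)⁻¹, (t : ℂ), (t : ℂ), (t : ℂ)⁻¹]

/-- `L = s(1₄ + EE')`. -/
def Lmat (s : ℂ) : Matrix (Fin 4) (Fin 4) ℂ :=
  s • ((1 : Matrix (Fin 4) (Fin 4) ℂ) + Evec * Evec')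

/-- `L̃ = τLτ`. -/
def Ltil (s : ℂ) : Matrix (Fin 4) (Fin 4) ℂ := tau4 * Lmat s * tau4

/-- `R = (1₂ ⊗ X ⊗ 1₂)(L ⊗ L̃)(1₂ ⊗ X⁻¹ ⊗ 1₂)`. -/
def Rmat (t : ℝ) (s : ℂ) : Matrix (Fin 16) (Fin 16) ℂ :=
  kron (kron one2 (Xq t)) one2 * kron (Lmat s) (Ltil s) * kron (kron one2 (Xq t)⁻¹) one2
namespace Module.End

open LinearMap

variable {K V : Type*} [Field K] [AddCommGroup V] [Module K V]

def involutionProj (f : End K V) (μ : K) : End K V := (2⁻¹ : K) • (1 + μ • f)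

variable [CharZero K] {f : End K V} {μ : K}

theorem isIdempotentElem_involutionProj (hf : f * f = 1) (hμ : μ * μ = 1) :
    IsIdempotentElem (involutionProj f μ) := by
  unfold IsIdempotentElem involutionProj
  rw [smul_mul_smul_comm, add_mul, mul_add, mul_add, smul_mul_smul_comm, hf, hμ]
  simp only [one_mul, mul_one, one_smul, mul_smul_comm]
  module

theorem range_involutionProj (hf : f * f = 1) (hμ : μ * μ = 1) :
    range (involutionProj f μ) = eigenspace f μ := by
  ext x
  rw [mem_range, mem_eigenspace_iff]
  constructor
  · rintro ⟨y, rfl⟩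
    have hfy : f (f y) = y := by rw [← Module.End.mul_apply, hf, one_apply]
    simp only [involutionProj, LinearMap.smul_apply, LinearMap.add_apply, one_apply, map_smul,
      map_add, hfy]
    linear_combination (norm := module) hμ • ((-2⁻¹ : K) • f y)
  · intro hx
    refine ⟨x, ?_⟩
    simp only [involutionProj, LinearMap.smul_apply, LinearMap.add_apply, one_apply, hx,
      smul_smul, hμ]
    module

theorem trace_involutionProj [FiniteDimensional K V] (hf : f * f = 1) (hμ : μ * μ = 1) :
    trace K V (involutionProj f μ) = finrank K (eigenspace f μ) := by
  rw [(isIdempotentElem_involutionProj hf hμ).isProj_range.trace, range_involutionProj hf hμ]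

theorem involutionProj_one_add_involutionProj_neg_one (f : End K V) :
    involutionProj f 1 + involutionProj f (-1) = 1 := by
  unfold involutionProj; module

theorem involutionProj_one_sub_involutionProj_neg_one (f : End K V) :
    involutionProj f 1 - involutionProj f (-1) = f := by
  unfold involutionProj; module

variable [FiniteDimensional K V]

theorem finrank_eigenspace_one_add_finrank_eigenspace_neg_one (hf : f * f = 1) :
    finrank K (eigenspace f 1) + finrank K (eigenspace f (-1)) = finrank K V := by
  have h := congr_arg (trace K V) (involutionProj_one_add_involutionProj_neg_one f)
  rw [map_add, trace_involutionProj hf (one_mul 1), trace_involutionProj hf (by norm_num),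
    trace_one] at h
  exact_mod_cast h

theorem trace_eq_finrank_eigenspace_one_sub_finrank_eigenspace_neg_one (hf : f * f = 1) :
    trace K V f = finrank K (eigenspace f 1) - finrank K (eigenspace f (-1)) := by
  have h := congr_arg (trace K V) (involutionProj_one_sub_involutionProj_neg_one f)
  rwa [map_sub, trace_involutionProj hf (one_mul 1), trace_involutionProj hf (by norm_num),
    eq_comm] at h

end Module.End

section Kron

variable {m n p q r u : ℕ}

open Kronecker in
theorem kron_eq_reindex_kronecker (A : Matrix (Fin m) (Fin n) ℂ) (B : Matrix (Fin p) (Fin q) ℂ) :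
    kron A B = reindex finProdFinEquiv finProdFinEquiv (A ⊗ₖ B) := rfl

theorem kron_mul_kron (A : Matrix (Fin m) (Fin n) ℂ) (B : Matrix (Fin n) (Fin p) ℂ)
    (C : Matrix (Fin q) (Fin r) ℂ) (D : Matrix (Fin r) (Fin u) ℂ) :
    kron A C * kron B D = kron (A * B) (C * D) := by
  simp only [kron_eq_reindex_kronecker, reindex_apply, submatrix_mul_equiv, mul_kronecker_mul]

theorem kron_one_one : kron (1 : Matrix (Fin m) (Fin m) ℂ) (1 : Matrix (Fin p) (Fin p) ℂ) = 1 := by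
  simp [kron_eq_reindex_kronecker]

theorem smul_kron_smul (c d : ℂ) (A : Matrix (Fin m) (Fin n) ℂ) (B : Matrix (Fin p) (Fin q) ℂ) :
    kron (c • A) (d • B) = (c * d) • kron A B := by
  ext i j
  simp only [kron, of_apply, Matrix.smul_apply, smul_eq_mul]
  ring

theorem trace_kron (A : Matrix (Fin m) (Fin m) ℂ) (B : Matrix (Fin p) (Fin p) ℂ) :
    (kron A B).trace = A.trace * B.trace := by
  rw [kron_eq_reindex_kronecker, ← coe_reindexAlgEquiv ℂ ℂ, trace_map, trace_kronecker]

end Kron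

section Conj

variable {ι R : Type*} [Fintype ι] [DecidableEq ι] [CommRing R] {P P' M : Matrix ι ι R}

theorem conj_mul_self_eq_one (hP : P' * P = 1) (hM : M * M = 1) :
    P * M * P' * (P * M * P') = 1 := by
  calc P * M * P' * (P * M * P') = P * M * (P' * P) * M * P' := by
        simp only [Matrix.mul_assoc]
    _ = P * P' := by rw [hP, Matrix.mul_one, Matrix.mul_assoc P, hM, Matrix.mul_one]
    _ = 1 := mul_eq_one_comm.mp hP

theorem trace_conj_eq (hP : P' * P = 1) : (P * M * P').trace = M.trace := by
  rw [trace_mul_cycle, hP, Matrix.one_mul]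

end Conj

theorem tau4_mul_tau4 : tau4 * tau4 = 1 := by
  ext i j
  fin_cases i <;> fin_cases j <;> simp [tau4, mul_apply, Fin.sum_univ_four, one_apply]

theorem trace_tau4 : tau4.trace = 2 := by
  simp [tau4, trace, Fin.sum_univ_four]; norm_num

theorem one_add_Evec_mul_Evec' : 1 + Evec * Evec' = tau4 := by
  ext i j
  fin_cases i <;> fin_cases j <;> simp [tau4, Evec, Evec', one_apply]

theorem Lmat_eq_smul_tau4 (s : ℂ) : Lmat s = s • tau4 := by
  rw [Lmat, one_add_Evec_mul_Evec']

theorem Ltil_eq_smul_tau4 (s : ℂ) : Ltil s = s • tau4 := by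
  rw [Ltil, Lmat_eq_smul_tau4, Matrix.mul_smul, Matrix.smul_mul, tau4_mul_tau4, Matrix.one_mul]

theorem isUnit_Xq {t : ℝ} (ht : t ≠ 0) : IsUnit (Xq t) := by
  have htC : (t : ℂ) ≠ 0 := ofReal_ne_zero.mpr ht
  refine (isUnit_iff_exists_inv.mpr ⟨tau4, tau4_mul_tau4⟩).mul (isUnit_diagonal.mpr ?_)
  refine Pi.isUnit_iff.mpr fun i => ?_
  fin_cases i <;> simp [htC]

theorem Rmat_eq_conj (t : ℝ) {s : ℂ} (hs : s * s = 1) :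
    Rmat t s =
      kron (kron one2 (Xq t)) one2 * kron tau4 tau4 * kron (kron one2 (Xq t)⁻¹) one2 := by
  rw [Rmat, Lmat_eq_smul_tau4, Ltil_eq_smul_tau4, smul_kron_smul, hs, one_smul]

theorem kron_Xq_inv_mul_kron_Xq {t : ℝ} (ht : t ≠ 0) :
    kron (kron one2 (Xq t)⁻¹) one2 * kron (kron one2 (Xq t)) one2 = 1 := by
  have hX : (Xq t)⁻¹ * Xq t = 1 := nonsing_inv_mul _ ((isUnit_iff_isUnit_det _).mp (isUnit_Xq ht))
  rw [kron_mul_kron, kron_mul_kron, hX, one2, Matrix.one_mul, kron_one_one, kron_one_one]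

theorem Rmat_mul_self {t : ℝ} (ht : t ≠ 0) {s : ℂ} (hs : s * s = 1) :
    Rmat t s * Rmat t s = 1 := by
  rw [Rmat_eq_conj t hs]
  refine conj_mul_self_eq_one (kron_Xq_inv_mul_kron_Xq ht) ?_
  rw [kron_mul_kron, tau4_mul_tau4, kron_one_one]

theorem trace_Rmat {t : ℝ} (ht : t ≠ 0) {s : ℂ} (hs : s * s = 1) : (Rmat t s).trace = 4 := by
  rw [Rmat_eq_conj t hs, trace_conj_eq (kron_Xq_inv_mul_kron_Xq ht), trace_kron, trace_tau4]
  norm_num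

theorem R_spectral_properties_general (t : ℝ) (ht0 : 0 < t)
    (s : ℂ) (hs : s = 1 ∨ s = -1) :
    Rmat t s * Rmat t s = 1 ∧
    Module.finrank ℂ
      (Module.End.eigenspace (Matrix.toLin' (Rmat t s)) (-1)) = 6 ∧
    Module.finrank ℂ
      (Module.End.eigenspace (Matrix.toLin' (Rmat t s)) 1) = 10 ∧
    (Rmat t s).trace = 4 := by
  have hss : s * s = 1 := by rcases hs with rfl | rfl <;> norm_num
  have hR := Rmat_mul_self ht0.ne' hss
  have htr := trace_Rmat ht0.ne' hss
  have hf : toLin' (Rmat t s) * toLin' (Rmat t s) = 1 := by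
    rw [Module.End.mul_eq_comp, ← toLin'_mul, hR, toLin'_one]; rfl
  have hsum := Module.End.finrank_eigenspace_one_add_finrank_eigenspace_neg_one hf
  have hdiff := Module.End.trace_eq_finrank_eigenspace_one_sub_finrank_eigenspace_neg_one hf
  rw [Module.finrank_fin_fun] at hsum
  rw [trace_toLin'_eq, htr] at hdiff
  have hdiff_int : (Module.finrank ℂ (Module.End.eigenspace (toLin' (Rmat t s)) 1) : ℤ) -
      Module.finrank ℂ (Module.End.eigenspace (toLin' (Rmat t s)) (-1)) = 4 := by
    exact_mod_cast hdiff.symm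
  exact ⟨hR, by omega, by omega, htr⟩

/-- For `0 < t ≤ 1`, `s = ±1`: `R² = 1₁₆`, the (-1)-eigenspace of `R` has dimension 6,
the (+1)-eigenspace has dimension 10, and `tr R = 4`. -/
theorem R_spectral_properties (t : ℝ) (ht0 : 0 < t) (ht1 : t ≤ 1)
    (s : ℂ) (hs : s = 1 ∨ s = -1) :
    Rmat t s * Rmat t s = 1 ∧
    Module.finrank ℂ
      (Module.End.eigenspace (Matrix.toLin' (Rmat t s)) (-1)) = 6 ∧
    Module.finrank ℂ
      (Module.End.eigenspace (Matrix.toLin' (Rmat t s)) 1) = 10 ∧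
    (Rmat t s).trace = 4 :=
  R_spectral_properties_general t ht0 s hs
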